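/- Let G be a simple graph with Δ := Δ(G) ≥ 2, ν := ν(G), such that ⌈Δ/2⌉ divides ν and |E(G)| = Δν + (ν/⌈Δ/2⌉)·⌊Δ/2⌋. Then for every vertex x of G, ν(G \ x) = ν(G). -/

import Mathlib

open scoped Classical

/-- `M` is a matching of `G`, given as a finite set of edges. -/
def IsMatchingFinset {V : Type*} (G : SimpleGraph V) (M : Finset (Sym2 V)) : Prop :=
  (M : Set (Sym2 V)) ⊆ G.edgeSet ∧
    ∀ e ∈ M, ∀ f ∈ M, e ≠ f → ∀ v : V, ¬(v ∈ e ∧ v ∈ f)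

/-- ν(G): the maximum size of a matching of `G`. -/
noncomputable def matchingNumber {V : Type*} (G : SimpleGraph V) : ℕ :=
  sSup {n | ∃ M : Finset (Sym2 V), IsMatchingFinset G M ∧ M.card = n}

/-- A proper edge coloring of `G` using colors `< n`. -/
def IsProperEdgeColoring {V : Type*} (G : SimpleGraph V) (n : ℕ) (c : Sym2 V → ℕ) : Prop :=
  (∀ e ∈ G.edgeSet, c e < n) ∧
    ∀ e ∈ G.edgeSet, ∀ f ∈ G.edgeSet, e ≠ f → (∃ v : V, v ∈ e ∧ v ∈ f) → c e ≠ c f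

/-- χ'(G): the edge chromatic index of `G`. -/
noncomputable def chromaticIndex {V : Type*} (G : SimpleGraph V) : ℕ :=
  sInf {n | ∃ c : Sym2 V → ℕ, IsProperEdgeColoring G n c}

/-- `G` is friendly-edge-colorable: its edge set is partitioned into maximum matchings. -/
noncomputable def Friendly {V : Type*} [Fintype V] (G : SimpleGraph V) : Prop :=
  ∃ P : Finset (Finset (Sym2 V)),
    (∀ M ∈ P, IsMatchingFinset G M ∧ M.card = matchingNumber G) ∧
    (∀ e, e ∈ G.edgeFinset ↔ ∃ M ∈ P, e ∈ M) ∧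
    ∀ M ∈ P, ∀ N ∈ P, M ≠ N → Disjoint M N

/-- The graph `G` with vertex `x` deleted. -/
def delVert {V : Type*} (G : SimpleGraph V) (x : V) : SimpleGraph {v : V // v ≠ x} :=
  G.induce {v : V | v ≠ x}

/-- `G` has a perfect matching. -/
def HasPerfectMatchingFinset {V : Type*} (G : SimpleGraph V) : Prop :=
  ∃ M : Finset (Sym2 V), IsMatchingFinset G M ∧ ∀ v : V, ∃ e ∈ M, v ∈ e

/-- `G` is factor-critical. -/
def FactorCritical {V : Type*} (G : SimpleGraph V) : Prop :=
  G.Connected ∧ ∀ x : V, HasPerfectMatchingFinset (delVert G x)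

/-!
If deleting `x` lowered `ν`, then `G - x` would have matching number at most `ν - 1` and at
least `|E| - Δ` edges. The Chvátal–Hanson bound `|E(H)| ≤ Δ ν(H) + ⌊ν(H) / ⌈Δ/2⌉⌋ ⌊Δ/2⌋`
for `H = G - x` then contradicts the hypothesis on `|E|`: as `⌈Δ/2⌉ ∣ ν`, the quotient
`⌊ν(H) / ⌈Δ/2⌉⌋` is at most `ν / ⌈Δ/2⌉ - 1`, and `⌊Δ/2⌋ ≥ 1`.

The bound is proved by induction on the number of edges. A vertex covered by every maximum
matching is deleted (`ν` drops, at most `Δ` edges are lost); a graph whose edges do not lie in one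
component is split in two. What remains is a connected graph in which every vertex is missed by
some maximum matching, and by Gallai's lemma it has at most `2ν + 1` non-isolated vertices, so the
degree sum gives the bound. For Gallai's lemma, take a maximum matching `L` missing two vertices
`u, w` at minimal distance, the neighbour `z` of `u` on a shortest path, and a maximum matching
`N` missing `z`. Swapping `L` and `N` on the component of `u` in `L ∆ N` produces a maximum
matching missing `z` and one of `u, w`, closer together, unless `u, w, z` all lie in that
component; but a connected graph of maximum degree two, having at least `n - 1` edges, has at
most two vertices of degree at most one.
-/

section

open Finset SimpleGraph

variable {V : Type*} {G H H₁ H₂ : SimpleGraph V} {L M N : Finset (Sym2 V)} {e f : Sym2 V}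
  {u v w z : V}

namespace SimpleGraph

lemma mem_support_of_mem_edgeSet (he : e ∈ G.edgeSet) (hv : v ∈ e) : v ∈ G.support := by
  obtain ⟨w, rfl⟩ := Sym2.mem_iff_exists.1 hv
  exact ⟨w, he⟩

lemma reachable_fromEdgeSet_of_mem {D : Set (Sym2 V)} (he : e ∈ D) (hv : v ∈ e) (hw : w ∈ e) :
    (fromEdgeSet D).Reachable v w := by
  by_cases hvw : v = w
  · exact hvw ▸ Reachable.refl v
  · rw [(Sym2.mem_and_mem_iff hvw).1 ⟨hv, hw⟩] at he
    exact ((fromEdgeSet_adj D).2 ⟨he, hvw⟩).reachable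

lemma exists_sup_eq_of_not_reachable {a b : V} (ha : a ∈ H.support) (hb : b ∈ H.support)
    (hab : ¬H.Reachable a b) : ∃ H₁ H₂ : SimpleGraph V,
      H₁ ⊔ H₂ = H ∧ Disjoint H₁.support H₂.support ∧ H₁ ≠ ⊥ ∧ H₂ ≠ ⊥ := by
  set c := H.connectedComponentMk a
  set H₁ := c.toSimpleGraph.spanningCoe
  have hadj {v w : V} : H₁.Adj v w ↔ v ∈ c.supp ∧ H.Adj v w := c.adj_spanningCoe_toSimpleGraph
  have hle : H₁ ≤ H := fun v w h => (hadj.1 h).2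
  refine ⟨H₁, H \ H₁, sup_sdiff_cancel_right hle, Set.disjoint_left.2 ?_, ?_, ?_⟩
  · rintro v ⟨x, hvx⟩ ⟨y, hvy, hnot⟩
    exact hnot (hadj.2 ⟨(hadj.1 hvx).1, hvy⟩)
  · obtain ⟨x, hax⟩ := ha
    exact ne_bot_iff_exists_adj.2 ⟨a, x, hadj.2 ⟨(c.mem_supp_iff a).2 rfl, hax⟩⟩
  · obtain ⟨y, hby⟩ := hb
    refine ne_bot_iff_exists_adj.2 ⟨b, y, hby, fun h => hab ?_⟩
    exact (ConnectedComponent.exact ((c.mem_supp_iff b).1 (hadj.1 h).1)).symm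

variable [Fintype V]

lemma degree_fromEdgeSet_le (D : Finset (Sym2 V)) (v : V) :
    (fromEdgeSet (D : Set (Sym2 V))).degree v ≤ #(D.filter (v ∈ ·)) := by
  rw [← card_incidenceFinset_eq_degree]
  refine card_le_card fun e he => ?_
  rw [mem_incidenceFinset, incidenceSet, edgeSet_fromEdgeSet] at he
  exact mem_filter.2 ⟨he.1.1, he.2⟩

lemma Connected.two_mul_card_le_sum_degree_add_two [DecidableRel G.Adj] (hG : G.Connected) :
    2 * Fintype.card V ≤ ∑ v, G.degree v + 2 := by
  have := hG.card_vert_le_card_edgeSet_add_one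
  rw [Nat.card_eq_fintype_card, Nat.card_eq_fintype_card, ← edgeFinset_card] at this
  rw [sum_degrees_eq_twice_card_edges]
  omega

lemma ConnectedComponent.two_mul_card_supp_le [DecidableRel G.Adj] (c : G.ConnectedComponent) :
    2 * #c.supp.toFinset ≤ ∑ v ∈ c.supp.toFinset, G.degree v + 2 := by
  have hconn : (G.induce c.supp).Connected := c.connected_toSimpleGraph
  have hdeg (v : c.supp) : (G.induce c.supp).degree v = G.degree v :=
    degree_induce_of_neighborSet_subset fun w hw => c.mem_supp_of_adj_mem_supp v.2 hw
  have h := hconn.two_mul_card_le_sum_degree_add_two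
  simp only [hdeg] at h
  rw [← Set.toFinset_card] at h
  convert h using 2
  exact sum_subtype (p := (· ∈ c.supp)) (f := fun v => G.degree v) _ fun _ => Set.mem_toFinset

lemma ConnectedComponent.exists_two_lt_degree [DecidableRel G.Adj] (c : G.ConnectedComponent)
    (hu : u ∈ c.supp) (hw : w ∈ c.supp) (hz : z ∈ c.supp) (huw : u ≠ w) (huz : u ≠ z)
    (hwz : w ≠ z) (hdu : G.degree u ≤ 1) (hdw : G.degree w ≤ 1) (hdz : G.degree z ≤ 1) :
    ∃ v ∈ c.supp, 2 < G.degree v := by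
  by_contra! h
  set T : Finset V := {u, w, z}
  have hT : #T = 3 := by simp [T, huw, huz, hwz]
  have hTK : T ⊆ c.supp.toFinset := by
    intro v hv
    simp only [T, mem_insert, mem_singleton] at hv
    rw [Set.mem_toFinset]
    rcases hv with rfl | rfl | rfl <;> assumption
  have hle : ∀ v ∈ c.supp.toFinset, G.degree v + (if v ∈ T then 1 else 0) ≤ 2 := by
    intro v hv
    split_ifs with hvT
    · simp only [T, mem_insert, mem_singleton] at hvT
      rcases hvT with rfl | rfl | rfl <;> omega
    · simpa using h v (Set.mem_toFinset.1 hv)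
  have hsum := sum_le_sum hle
  rw [sum_add_distrib, sum_boole, filter_mem_eq_inter, inter_eq_right.2 hTK, hT, sum_const,
    smul_eq_mul, Nat.cast_id] at hsum
  have := c.two_mul_card_supp_le
  omega

variable [DecidableRel H.Adj]

lemma sum_degree_support_eq : ∑ v ∈ H.support.toFinset, H.degree v = 2 * #H.edgeFinset := by
  rw [← sum_degrees_eq_twice_card_edges]
  exact sum_subset (subset_univ _) fun v _ hv =>
    (degree_eq_zero_iff_notMem_support H v).2 (by simpa using hv)

lemma degree_le_card_support_sub_one (hv : v ∈ H.support) :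
    H.degree v ≤ #H.support.toFinset - 1 := by
  rw [← card_neighborFinset_eq_degree, ← card_erase_of_mem (Set.mem_toFinset.2 hv)]
  refine card_le_card fun w hw => ?_
  rw [mem_neighborFinset] at hw
  exact mem_erase.2 ⟨hw.ne.symm, Set.mem_toFinset.2 ⟨v, hw.symm⟩⟩

lemma card_edgeFinset_deleteIncidenceSet_add_degree (v : V) :
    #(H.deleteIncidenceSet v).edgeFinset + H.degree v = #H.edgeFinset := by
  have := card_incidenceFinset_eq_degree H v ▸ card_le_card (incidenceFinset_subset H v)
  rw [card_edgeFinset_deleteIncidenceSet]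
  omega

lemma card_edgeFinset_eq_add_of_sup_eq [DecidableRel H₁.Adj] [DecidableRel H₂.Adj]
    (hsup : H₁ ⊔ H₂ = H) (hdisj : Disjoint H₁.support H₂.support) :
    #H.edgeFinset = #H₁.edgeFinset + #H₂.edgeFinset := by
  rw [← card_union_of_disjoint (disjoint_edgeFinset.2 (disjoint_of_disjoint_support _ hdisj)),
    ← edgeFinset_sup]
  subst hsup
  convert rfl

end SimpleGraph

def Covers (M : Finset (Sym2 V)) (v : V) : Prop := ∃ e ∈ M, v ∈ e

def IsMaximumMatching (G : SimpleGraph V) (M : Finset (Sym2 V)) : Prop :=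
  IsMatchingFinset G M ∧ #M = matchingNumber G

lemma card_filter_mem_eq_zero (h : ¬Covers M v) : #(M.filter (v ∈ ·)) = 0 :=
  card_eq_zero.2 <| filter_eq_empty_iff.2 fun e he hv => h ⟨e, he, hv⟩

lemma card_filter_covers_le (M : Finset (Sym2 V)) (s : Finset V) :
    #(s.filter (Covers M)) ≤ 2 * #M :=
  calc #(s.filter (Covers M)) ≤ #(M.biUnion Sym2.toFinset) :=
        card_le_card fun v hv => by
          obtain ⟨e, he, hve⟩ := (mem_filter.1 hv).2
          exact mem_biUnion.2 ⟨e, he, Sym2.mem_toFinset.2 hve⟩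
    _ ≤ ∑ e ∈ M, #e.toFinset := card_biUnion_le
    _ ≤ ∑ _e ∈ M, 2 := sum_le_sum fun e _ => by rw [Sym2.card_toFinset]; split_ifs <;> omega
    _ = 2 * #M := by rw [sum_const, smul_eq_mul, mul_comm]

lemma bddAbove_card_isMatchingFinset [Fintype V] (G : SimpleGraph V) :
    BddAbove {n | ∃ M, IsMatchingFinset G M ∧ #M = n} :=
  ⟨Fintype.card (Sym2 V), by rintro _ ⟨M, -, rfl⟩; exact card_le_univ M⟩

namespace IsMatchingFinset

lemma eq_of_mem_of_mem (hM : IsMatchingFinset G M) (he : e ∈ M) (hf : f ∈ M) (hve : v ∈ e)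
    (hvf : v ∈ f) : e = f :=
  by_contra fun hne => hM.2 e he f hf hne v ⟨hve, hvf⟩

lemma card_filter_mem_le_one (hM : IsMatchingFinset G M) (v : V) : #(M.filter (v ∈ ·)) ≤ 1 :=
  card_le_one.2 fun _ he _ hf =>
    hM.eq_of_mem_of_mem (mem_filter.1 he).1 (mem_filter.1 hf).1 (mem_filter.1 he).2
      (mem_filter.1 hf).2

lemma mono (hM : IsMatchingFinset G M) (h : G ≤ H) : IsMatchingFinset H M :=
  ⟨hM.1.trans (edgeSet_mono h), hM.2⟩

lemma insert (hM : IsMatchingFinset G M) (huw : G.Adj u w) (hu : ¬Covers M u)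
    (hw : ¬Covers M w) : IsMatchingFinset G (insert s(u, w) M) := by
  refine ⟨?_, ?_⟩
  · rw [coe_insert, Set.insert_subset_iff]
    exact ⟨huw, hM.1⟩
  · have hnew : ∀ f ∈ M, ∀ x, ¬(x ∈ s(u, w) ∧ x ∈ f) := by
      rintro f hf x ⟨hx, hxf⟩
      rcases Sym2.mem_iff.1 hx with rfl | rfl
      exacts [hu ⟨f, hf, hxf⟩, hw ⟨f, hf, hxf⟩]
    simp only [mem_insert]
    rintro e (rfl | he) f (rfl | hf) hne x hx
    exacts [(hne rfl).elim, hnew f hf x hx, hnew e he x hx.symm, hM.2 e he f hf hne x hx]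

lemma union (h₁ : IsMatchingFinset H₁ L) (h₂ : IsMatchingFinset H₂ N)
    (h : Disjoint H₁.support H₂.support) :
    IsMatchingFinset (H₁ ⊔ H₂) (L ∪ N) ∧ Disjoint L N := by
  have hsep {e f : Sym2 V} (he : e ∈ L) (hf : f ∈ N) (v : V) : ¬(v ∈ e ∧ v ∈ f) :=
    fun ⟨hve, hvf⟩ => Set.disjoint_left.1 h (mem_support_of_mem_edgeSet (h₁.1 he) hve)
      (mem_support_of_mem_edgeSet (h₂.1 hf) hvf)
  refine ⟨⟨?_, ?_⟩, disjoint_left.2 fun e he hf => ?_⟩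
  · rw [coe_union, edgeSet_sup]
    exact Set.union_subset_union h₁.1 h₂.1
  · simp only [mem_union]
    rintro e (he | he) f (hf | hf) hne v hv
    exacts [h₁.2 e he f hf hne v hv, hsep he hf v hv, hsep hf he v hv.symm,
      h₂.2 e he f hf hne v hv]
  · induction e using Sym2.ind with
    | _ v w => exact hsep he hf v ⟨Sym2.mem_mk_left v w, Sym2.mem_mk_left v w⟩

lemma card_le_matchingNumber [Fintype V] (hM : IsMatchingFinset G M) :
    #M ≤ matchingNumber G :=
  le_csSup (bddAbove_card_isMatchingFinset G) ⟨M, hM, rfl⟩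

end IsMatchingFinset

section Fintype

variable [Fintype V]

lemma exists_isMaximumMatching (G : SimpleGraph V) : ∃ M, IsMaximumMatching G M :=
  Nat.sSup_mem (s := {n | ∃ M, IsMatchingFinset G M ∧ #M = n}) ⟨0, ∅, ⟨by simp, by simp⟩, rfl⟩
    (bddAbove_card_isMatchingFinset G)

lemma matchingNumber_mono (h : G ≤ H) : matchingNumber G ≤ matchingNumber H := by
  obtain ⟨M, hM, hcard⟩ := exists_isMaximumMatching G
  exact hcard ▸ (hM.mono h).card_le_matchingNumber

lemma matchingNumber_add_le_matchingNumber_sup (h : Disjoint H₁.support H₂.support) :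
    matchingNumber H₁ + matchingNumber H₂ ≤ matchingNumber (H₁ ⊔ H₂) := by
  obtain ⟨L, hL, hLcard⟩ := exists_isMaximumMatching H₁
  obtain ⟨N, hN, hNcard⟩ := exists_isMaximumMatching H₂
  obtain ⟨hLN, hdisj⟩ := hL.union hN h
  rw [← hLcard, ← hNcard, ← card_union_of_disjoint hdisj]
  exact hLN.card_le_matchingNumber

lemma matchingNumber_deleteIncidenceSet_lt (hv : ∀ M, IsMaximumMatching H M → Covers M v) :
    matchingNumber (H.deleteIncidenceSet v) < matchingNumber H := by
  obtain ⟨M, hM, hMcard⟩ := exists_isMaximumMatching (H.deleteIncidenceSet v)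
  have hMH := hM.mono (H.deleteIncidenceSet_le v)
  refine lt_of_le_of_ne (hMcard ▸ hMH.card_le_matchingNumber) fun heq => ?_
  obtain ⟨e, he, hve⟩ := hv M ⟨hMH, hMcard.trans heq⟩
  have := hM.1 he
  rw [edgeSet_deleteIncidenceSet] at this
  exact this.2 ⟨this.1, hve⟩

lemma IsMaximumMatching.not_adj (hM : IsMaximumMatching G M) (hu : ¬Covers M u)
    (hw : ¬Covers M w) : ¬G.Adj u w := fun huw => by
  have hnew : s(u, w) ∉ M := fun h => hu ⟨_, h, Sym2.mem_mk_left u w⟩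
  have := (hM.1.insert huw hu hw).card_le_matchingNumber
  rw [card_insert_of_notMem hnew, hM.2] at this
  omega

end Fintype

section Embedding

variable {W : Type*} {G' : SimpleGraph W} {M' : Finset (Sym2 W)}

lemma IsMatchingFinset.map (f : G ↪g G') (hM : IsMatchingFinset G M) :
    IsMatchingFinset G' (M.map f.toEmbedding.sym2Map) := by
  refine ⟨fun e he => ?_, fun e₁ he₁ e₂ he₂ hne x ⟨hx₁, hx₂⟩ => hne ?_⟩
  · obtain ⟨e, he', rfl⟩ := mem_map.1 he
    exact f.toHom.map_mem_edgeSet (hM.1 he')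
  · obtain ⟨e₁, he₁', rfl⟩ := mem_map.1 he₁
    obtain ⟨e₂, he₂', rfl⟩ := mem_map.1 he₂
    obtain ⟨a, ha, rfl⟩ := Sym2.mem_map.1 hx₁
    obtain ⟨b, hb, hab⟩ := Sym2.mem_map.1 hx₂
    rw [f.injective hab] at hb
    rw [hM.eq_of_mem_of_mem he₁' he₂' ha hb]

lemma IsMatchingFinset.comap (f : G ↪g G') (hM : IsMatchingFinset G' M') :
    IsMatchingFinset G (M'.preimage (Sym2.map f) (Sym2.map.injective f.injective).injOn) := by
  refine ⟨fun e he => ?_, fun e₁ he₁ e₂ he₂ hne v ⟨hv₁, hv₂⟩ => hne ?_⟩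
  · exact f.map_mem_edgeSet_iff.1 (hM.1 (mem_preimage.1 he))
  · exact Sym2.map.injective f.injective <| hM.eq_of_mem_of_mem (mem_preimage.1 he₁)
      (mem_preimage.1 he₂) (Sym2.mem_map.2 ⟨v, hv₁, rfl⟩) (Sym2.mem_map.2 ⟨v, hv₂, rfl⟩)

variable [Fintype V] [Fintype W]

lemma matchingNumber_le_of_embedding (f : G ↪g G') : matchingNumber G ≤ matchingNumber G' := by
  obtain ⟨M, hM, hcard⟩ := exists_isMaximumMatching G
  rw [← hcard, ← card_map f.toEmbedding.sym2Map]
  exact (hM.map f).card_le_matchingNumber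

lemma matchingNumber_le_of_embedding_of_support_subset (f : G ↪g G')
    (hf : G'.support ⊆ Set.range f) : matchingNumber G' ≤ matchingNumber G := by
  obtain ⟨M', hM', hcard⟩ := exists_isMaximumMatching G'
  have hrange : ∀ e ∈ M', e ∈ Set.range (Sym2.map f) := fun e he => by
    induction e using Sym2.ind with
    | _ a b =>
      obtain ⟨a', rfl⟩ := hf (mem_support_of_mem_edgeSet (hM'.1 he) (Sym2.mem_mk_left a b))
      obtain ⟨b', rfl⟩ := hf (mem_support_of_mem_edgeSet (hM'.1 he) (Sym2.mem_mk_right _ b))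
      exact ⟨s(a', b'), rfl⟩
  rw [← hcard, ← filter_true_of_mem hrange, ← card_preimage]
  exact (hM'.comap f).card_le_matchingNumber

lemma matchingNumber_induce_of_support_subset {s : Set V} (h : G.support ⊆ s) :
    matchingNumber (G.induce s) = matchingNumber G :=
  le_antisymm (matchingNumber_le_of_embedding (Embedding.induce s))
    (matchingNumber_le_of_embedding_of_support_subset (Embedding.induce s)
      fun v hv => ⟨⟨v, h hv⟩, rfl⟩)

end Embedding

section Patch

def NoEdgeCrosses (D : Finset (Sym2 V)) (S : Set V) : Prop :=
  ∀ e ∈ D, ∀ v ∈ e, v ∈ S → ∀ w ∈ e, w ∈ S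

variable {S : Set V}

lemma noEdgeCrosses_supp (D : Finset (Sym2 V))
    (c : (fromEdgeSet (D : Set (Sym2 V))).ConnectedComponent) : NoEdgeCrosses D c.supp :=
  fun _ he v hv hvS w hw => (c.mem_supp_iff w).2 <| ((c.mem_supp_iff v).1 hvS) ▸
    ConnectedComponent.sound (reachable_fromEdgeSet_of_mem (mem_coe.2 he) hw hv)

noncomputable def patch (L N : Finset (Sym2 V)) (S : Set V) : Finset (Sym2 V) :=
  L.filter (fun e => ¬∀ v ∈ e, v ∈ S) ∪ N.filter (fun e => ∀ v ∈ e, v ∈ S)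

lemma mem_of_mem_patch (hS : NoEdgeCrosses (symmDiff L N) S) (he : e ∈ patch L N S)
    (hv : v ∈ e) : (v ∈ S → e ∈ N) ∧ (v ∉ S → e ∈ L) := by
  rcases mem_union.1 he with he | he <;> rw [mem_filter] at he
  · refine ⟨fun hvS => by_contra fun heN => he.2 ?_, fun _ => he.1⟩
    exact hS e (mem_symmDiff.2 (Or.inl ⟨he.1, heN⟩)) v hv hvS
  · exact ⟨fun _ => he.1, fun hvS => (hvS (he.2 v hv)).elim⟩

lemma IsMatchingFinset.patch (hL : IsMatchingFinset G L) (hN : IsMatchingFinset G N)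
    (hS : NoEdgeCrosses (symmDiff L N) S) : IsMatchingFinset G (patch L N S) := by
  refine ⟨fun e he => ?_, fun e he f hf hne v ⟨hve, hvf⟩ => hne ?_⟩
  · rcases mem_union.1 he with he | he
    exacts [hL.1 (mem_filter.1 he).1, hN.1 (mem_filter.1 he).1]
  · by_cases hvS : v ∈ S
    · exact hN.eq_of_mem_of_mem ((mem_of_mem_patch hS he hve).1 hvS)
        ((mem_of_mem_patch hS hf hvf).1 hvS) hve hvf
    · exact hL.eq_of_mem_of_mem ((mem_of_mem_patch hS he hve).2 hvS)
        ((mem_of_mem_patch hS hf hvf).2 hvS) hve hvf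

lemma covers_patch_of_mem (hS : NoEdgeCrosses (symmDiff L N) S) (hv : v ∈ S) :
    Covers (patch L N S) v ↔ Covers N v := by
  refine ⟨fun ⟨e, he, hve⟩ => ⟨e, (mem_of_mem_patch hS he hve).1 hv, hve⟩,
    fun ⟨e, he, hve⟩ => ⟨e, ?_, hve⟩⟩
  by_cases hin : ∀ w ∈ e, w ∈ S
  · exact mem_union_right _ (mem_filter.2 ⟨he, hin⟩)
  · refine mem_union_left _ (mem_filter.2 ⟨by_contra fun heL => hin ?_, hin⟩)
    exact hS e (mem_symmDiff.2 (Or.inr ⟨he, heL⟩)) v hve hv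

lemma covers_patch_of_notMem (hv : v ∉ S) : Covers (patch L N S) v ↔ Covers L v := by
  refine ⟨fun ⟨e, he, hve⟩ => ⟨e, ?_, hve⟩, fun ⟨e, he, hve⟩ => ⟨e, ?_, hve⟩⟩
  · rcases mem_union.1 he with he | he <;> rw [mem_filter] at he
    exacts [he.1, (hv (he.2 v hve)).elim]
  · exact mem_union_left _ (mem_filter.2 ⟨he, fun h => hv (h v hve)⟩)

lemma card_patch_add_card_patch (L N : Finset (Sym2 V)) (S : Set V) :
    #(patch L N S) + #(patch N L S) = #L + #N := by
  have hdisj (X Y : Finset (Sym2 V)) :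
      Disjoint (X.filter (fun e => ¬∀ v ∈ e, v ∈ S)) (Y.filter (fun e => ∀ v ∈ e, v ∈ S)) :=
    disjoint_left.2 fun _ h h' => (mem_filter.1 h).2 (mem_filter.1 h').2
  rw [patch, patch, card_union_of_disjoint (hdisj L N), card_union_of_disjoint (hdisj N L),
    ← card_filter_add_card_filter_not (s := L) (fun e => ∀ v ∈ e, v ∈ S),
    ← card_filter_add_card_filter_not (s := N) (fun e => ∀ v ∈ e, v ∈ S)]
  ring

lemma IsMaximumMatching.patch [Fintype V] (hL : IsMaximumMatching G L)
    (hN : IsMaximumMatching G N) (hS : NoEdgeCrosses (symmDiff L N) S) :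
    IsMaximumMatching G (patch L N S) := by
  have hLN := (hL.1.patch hN.1 hS).card_le_matchingNumber
  have hNL := (hN.1.patch hL.1 (symmDiff_comm L N ▸ hS)).card_le_matchingNumber
  have := card_patch_add_card_patch L N S
  exact ⟨hL.1.patch hN.1 hS, by linarith [hL.2, hN.2]⟩

end Patch

section Gallai

variable [Fintype V]

lemma exists_isMaximumMatching_not_covers_of_not_covers (hL : IsMaximumMatching G L)
    (hN : IsMaximumMatching G N) (hu : ¬Covers L u) (hw : ¬Covers L w) (hz : ¬Covers N z)
    (huw : u ≠ w) (huz : u ≠ z) (hwz : w ≠ z) :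
    ∃ M, IsMaximumMatching G M ∧ ¬Covers M z ∧ (¬Covers M u ∨ ¬Covers M w) := by
  set F := fromEdgeSet ((symmDiff L N : Finset (Sym2 V)) : Set (Sym2 V))
  set c := F.connectedComponentMk u
  have hS := noEdgeCrosses_supp (symmDiff L N) c
  have hS' : NoEdgeCrosses (symmDiff N L) c.supp := symmDiff_comm L N ▸ hS
  have huS : u ∈ c.supp := (c.mem_supp_iff u).2 rfl
  by_cases hzS : z ∈ c.supp; swap
  · exact ⟨patch N L c.supp, hN.patch hL hS', (covers_patch_of_notMem hzS).not.2 hz,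
      Or.inl ((covers_patch_of_mem hS' huS).not.2 hu)⟩
  by_cases hwS : w ∈ c.supp; swap
  · exact ⟨patch L N c.supp, hL.patch hN hS, (covers_patch_of_mem hS hzS).not.2 hz,
      Or.inr ((covers_patch_of_notMem hwS).not.2 hw)⟩
  -- `u`, `w` and `z` are three ends of the component `c` of `L ∆ N`, of maximum degree two.
  have hdeg (v : V) : F.degree v ≤ #(L.filter (v ∈ ·)) + #(N.filter (v ∈ ·)) := by
    refine (degree_fromEdgeSet_le _ v).trans ((card_le_card ?_).trans (card_union_le _ _))
    rw [← filter_union]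
    exact filter_subset_filter _ symmDiff_le_sup
  obtain ⟨v, -, hv⟩ := c.exists_two_lt_degree huS hwS hzS huw huz hwz
    ((hdeg u).trans (by simp [card_filter_mem_eq_zero hu, hN.1.card_filter_mem_le_one u]))
    ((hdeg w).trans (by simp [card_filter_mem_eq_zero hw, hN.1.card_filter_mem_le_one w]))
    ((hdeg z).trans (by simp [card_filter_mem_eq_zero hz, hL.1.card_filter_mem_le_one z]))
  have := hdeg v
  have := hL.1.card_filter_mem_le_one v
  have := hN.1.card_filter_mem_le_one v
  omega

theorem eq_of_not_covers_of_walk (hmiss : ∀ v, ∃ M, IsMaximumMatching G M ∧ ¬Covers M v)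
    (p : G.Walk u w) (hL : IsMaximumMatching G L) (hu : ¬Covers L u) (hw : ¬Covers L w) :
    u = w := by
  induction p generalizing L with
  | nil => rfl
  | @cons u z w huz q ih =>
    by_contra huw
    by_cases hzw : z = w
    · exact hL.not_adj hu hw (hzw ▸ huz)
    obtain ⟨N, hN, hNz⟩ := hmiss z
    obtain ⟨M, hM, hMz, hMu | hMw⟩ :=
      exists_isMaximumMatching_not_covers_of_not_covers hL hN hu hw hNz huw huz.ne (Ne.symm hzw)
    · exact hM.not_adj hMu hMz huz
    · exact hzw (ih hM hMz hMw)

theorem card_le_two_mul_matchingNumber_add_one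
    (hmiss : ∀ v, ∃ M, IsMaximumMatching G M ∧ ¬Covers M v) (K : Finset V)
    (hK : ∀ a ∈ K, ∀ b ∈ K, G.Reachable a b) : #K ≤ 2 * matchingNumber G + 1 := by
  obtain ⟨M, hM⟩ := exists_isMaximumMatching G
  have hmissed : #(K.filter (¬Covers M ·)) ≤ 1 := card_le_one.2 fun a ha b hb => by
    rw [mem_filter] at ha hb
    exact eq_of_not_covers_of_walk hmiss (hK a ha.1 b hb.1).some hM ha.2 hb.2
  have := card_filter_covers_le M K
  have := card_filter_add_card_filter_not (s := K) (Covers M)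
  linarith [hM.2]

end Gallai

section ChvatalHanson

def chvatalHansonBound (D ν : ℕ) : ℕ := D * ν + ν / ((D + 1) / 2) * (D / 2)

variable {D m n E : ℕ}

lemma chvatalHansonBound_mono (D : ℕ) : Monotone (chvatalHansonBound D) := fun _ _ h =>
  add_le_add (Nat.mul_le_mul_left D h) (Nat.mul_le_mul_right _ (Nat.div_le_div_right h))

lemma chvatalHansonBound_add_le (D m n : ℕ) :
    chvatalHansonBound D m + chvatalHansonBound D n ≤ chvatalHansonBound D (m + n) := by
  have := Nat.mul_le_mul_right (D / 2)
    (Nat.div_add_div_le_add_div (x := m) (y := n) (z := (D + 1) / 2))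
  simp only [chvatalHansonBound, mul_add, add_mul] at *
  omega

lemma chvatalHansonBound_add_le_of_lt (h : m < n) :
    chvatalHansonBound D m + D ≤ chvatalHansonBound D n := by
  have h₁ : D * m + D ≤ D * n := by simpa [mul_add] using Nat.mul_le_mul_left D h
  have h₂ := Nat.mul_le_mul_right (D / 2) (Nat.div_le_div_right (c := (D + 1) / 2) h.le)
  simp only [chvatalHansonBound]
  omega

lemma chvatalHansonBound_add_le_of_dvd (hdvd : (D + 1) / 2 ∣ n) (h : m < n) :
    chvatalHansonBound D m + D + D / 2 ≤ chvatalHansonBound D n := by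
  obtain ⟨k, rfl⟩ := hdvd
  have hc : 0 < (D + 1) / 2 := Nat.pos_of_ne_zero fun hc => by simp [hc] at h
  have hk : m / ((D + 1) / 2) + 1 ≤ k :=
    (Nat.div_lt_iff_lt_mul hc).2 (by rwa [mul_comm] at h)
  have h₁ : D * m + D ≤ D * ((D + 1) / 2 * k) := by
    simpa [mul_add] using Nat.mul_le_mul_left D h
  have h₂ := Nat.mul_le_mul_right (D / 2) hk
  simp only [chvatalHansonBound, Nat.mul_div_cancel_left k hc, add_mul, one_mul] at *
  omega

lemma le_chvatalHansonBound (hn : n ≤ 2 * m + 1) (hD : 2 * E ≤ n * D)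
    (hn' : 2 * E ≤ n * (n - 1)) : E ≤ chvatalHansonBound D m := by
  unfold chvatalHansonBound
  by_cases hsmall : m < (D + 1) / 2
  · have : n * (n - 1) ≤ (2 * m + 1) * (2 * m) := Nat.mul_le_mul hn (by omega)
    have : m * (2 * m + 1) ≤ D * m := mul_comm m D ▸ Nat.mul_le_mul_left m (by omega)
    have : (2 * m + 1) * (2 * m) = 2 * (m * (2 * m + 1)) := by ring
    omega
  · have hslack : D / 2 ≤ m / ((D + 1) / 2) * (D / 2) := by
      rcases Nat.eq_zero_or_pos ((D + 1) / 2) with hc | hc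
      · omega
      · exact Nat.le_mul_of_pos_left _ (Nat.div_pos (by omega) hc)
    have : n * D ≤ (2 * m + 1) * D := Nat.mul_le_mul_right D hn
    have : (2 * m + 1) * D = 2 * (D * m) + D := by ring
    omega

variable [Fintype V] [DecidableRel H.Adj]

lemma card_edgeFinset_le_of_reachable (hdeg : ∀ v, H.degree v ≤ D)
    (hmiss : ∀ v, ∃ M, IsMaximumMatching H M ∧ ¬Covers M v)
    (hconn : ∀ a ∈ H.support, ∀ b ∈ H.support, H.Reachable a b) :
    #H.edgeFinset ≤ chvatalHansonBound D (matchingNumber H) := by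
  have hK := card_le_two_mul_matchingNumber_add_one hmiss H.support.toFinset
    (by simpa using hconn)
  refine le_chvatalHansonBound hK ?_ ?_ <;> rw [← sum_degree_support_eq, ← smul_eq_mul]
  · exact sum_le_card_nsmul _ _ _ fun v _ => hdeg v
  · exact sum_le_card_nsmul _ _ _ fun v hv =>
      degree_le_card_support_sub_one (Set.mem_toFinset.1 hv)

lemma card_edgeFinset_le_of_deleteIncidenceSet (hdeg : H.degree v ≤ D)
    (hv : ∀ M, IsMaximumMatching H M → Covers M v)
    (h : #(H.deleteIncidenceSet v).edgeFinset ≤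
      chvatalHansonBound D (matchingNumber (H.deleteIncidenceSet v))) :
    #H.edgeFinset ≤ chvatalHansonBound D (matchingNumber H) := by
  have := card_edgeFinset_deleteIncidenceSet_add_degree (H := H) v
  have := chvatalHansonBound_add_le_of_lt (D := D) (matchingNumber_deleteIncidenceSet_lt hv)
  omega

lemma card_edgeFinset_le_of_sup_eq [DecidableRel H₁.Adj] [DecidableRel H₂.Adj]
    (hsup : H₁ ⊔ H₂ = H) (hdisj : Disjoint H₁.support H₂.support)
    (h₁ : #H₁.edgeFinset ≤ chvatalHansonBound D (matchingNumber H₁))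
    (h₂ : #H₂.edgeFinset ≤ chvatalHansonBound D (matchingNumber H₂)) :
    #H.edgeFinset ≤ chvatalHansonBound D (matchingNumber H) :=
  calc #H.edgeFinset = #H₁.edgeFinset + #H₂.edgeFinset :=
        card_edgeFinset_eq_add_of_sup_eq hsup hdisj
    _ ≤ chvatalHansonBound D (matchingNumber H₁ + matchingNumber H₂) :=
        (add_le_add h₁ h₂).trans (chvatalHansonBound_add_le D _ _)
    _ ≤ chvatalHansonBound D (matchingNumber H) :=
        chvatalHansonBound_mono D (hsup ▸ matchingNumber_add_le_matchingNumber_sup hdisj)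

theorem card_edgeFinset_le_chvatalHansonBound (H : SimpleGraph V) [DecidableRel H.Adj]
    (hdeg : ∀ v, H.degree v ≤ D) : #H.edgeFinset ≤ chvatalHansonBound D (matchingNumber H) := by
  induction hn : #H.edgeFinset using Nat.strong_induction_on generalizing H with
  | _ n ih =>
  subst hn
  have ih' (H' : SimpleGraph V) [DecidableRel H'.Adj] (hle : H' ≤ H)
      (hlt : #H'.edgeFinset < #H.edgeFinset) :
      #H'.edgeFinset ≤ chvatalHansonBound D (matchingNumber H') :=
    ih _ hlt H' (fun v => (degree_le_of_le hle).trans (hdeg v)) rfl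
  by_cases hmiss : ∀ v, ∃ M, IsMaximumMatching H M ∧ ¬Covers M v
  · by_cases hconn : ∀ a ∈ H.support, ∀ b ∈ H.support, H.Reachable a b
    · exact card_edgeFinset_le_of_reachable hdeg hmiss hconn
    push Not at hconn
    obtain ⟨a, ha, b, hb, hab⟩ := hconn
    obtain ⟨H₁, H₂, hsup, hdisj, h₁, h₂⟩ := exists_sup_eq_of_not_reachable ha hb hab
    have hE := card_edgeFinset_eq_add_of_sup_eq hsup hdisj
    have hpos₁ := card_pos.2 (edgeFinset_nonempty.2 h₁)
    have hpos₂ := card_pos.2 (edgeFinset_nonempty.2 h₂)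
    exact card_edgeFinset_le_of_sup_eq hsup hdisj (ih' H₁ (hsup ▸ le_sup_left) (by omega))
      (ih' H₂ (hsup ▸ le_sup_right) (by omega))
  · push Not at hmiss
    obtain ⟨v, hv⟩ := hmiss
    obtain ⟨M, hM⟩ := exists_isMaximumMatching H
    obtain ⟨e, he, hve⟩ := hv M hM
    have hpos : 0 < H.degree v :=
      (degree_pos_iff_mem_support H v).2 (mem_support_of_mem_edgeSet (hM.1.1 he) hve)
    have := card_edgeFinset_deleteIncidenceSet_add_degree (H := H) v
    exact card_edgeFinset_le_of_deleteIncidenceSet (hdeg v) hv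
      (ih' _ (H.deleteIncidenceSet_le v) (by omega))

end ChvatalHanson

end

theorem stmt_6_general {V : Type*} [Fintype V] (G : SimpleGraph V) (hΔ : 2 ≤ G.maxDegree)
    (hdvd : (G.maxDegree + 1) / 2 ∣ matchingNumber G)
    (hE : G.edgeFinset.card =
      G.maxDegree * matchingNumber G +
        (matchingNumber G / ((G.maxDegree + 1) / 2)) * (G.maxDegree / 2)) :
    ∀ x : V, matchingNumber (delVert G x) = matchingNumber G := by
  intro x
  have hdel : matchingNumber (delVert G x) = matchingNumber (G.deleteIncidenceSet x) := by
    rw [delVert, ← G.induce_deleteIncidenceSet_of_notMem (x := x) (s := {v | v ≠ x}) (by simp)]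
    exact matchingNumber_induce_of_support_subset fun v hv =>
      (G.support_deleteIncidenceSet_subset x hv).2
  rw [hdel]
  refine le_antisymm (matchingNumber_mono (G.deleteIncidenceSet_le x)) (not_lt.1 fun hlt => ?_)
  have hCH := card_edgeFinset_le_chvatalHansonBound (G.deleteIncidenceSet x) fun v =>
    (SimpleGraph.degree_le_of_le (G.deleteIncidenceSet_le x)).trans (G.degree_le_maxDegree v)
  have hsplit := SimpleGraph.card_edgeFinset_deleteIncidenceSet_add_degree (H := G) x
  have hbound := chvatalHansonBound_add_le_of_dvd hdvd hlt
  have := G.degree_le_maxDegree x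
  change G.edgeFinset.card = chvatalHansonBound G.maxDegree (matchingNumber G) at hE
  omega

theorem stmt_6 {V : Type*} [Fintype V] (G : SimpleGraph V) (hΔ : 2 ≤ G.maxDegree)
    (hiso : ∀ v : V, 0 < G.degree v)
    (hdvd : (G.maxDegree + 1) / 2 ∣ matchingNumber G)
    (hE : G.edgeFinset.card =
      G.maxDegree * matchingNumber G +
        (matchingNumber G / ((G.maxDegree + 1) / 2)) * (G.maxDegree / 2)) :
    ∀ x : V, matchingNumber (delVert G x) = matchingNumber G :=
  stmt_6_general G hΔ hdvd hE
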